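/- arXiv:1501.06727 — 2 statements merged into one kernel-verified Lean document; each statement's English description precedes it below -/
import Mathlib

section
/- Let p be a strictly positive probability distribution. Suppose for disjoint variable sets D, A, B (with A = Cc_G(Pa_G(C)) \ Pa_G(D) playing the role of 'extra parents' and B = Pa_G(D)) it holds that: (i) C ⊥_p N \ (A ∪ B) | (A ∪ B) for every superset C ⊇ D with N ⊇ A ∪ B, and (ii) D ⊥_p A | B. Then D ⊥_p N \ B | B. Conversely, (i) and (ii) follow from D ⊥_p N \ B | B by decomposition and weak union. In other words, for a fixed chain component C of an AMP chain graph G, the conjunction of properties C1 (C ⊥_p Nd_G(C) \ Cc_G(Pa_G(C)) | Cc_G(Pa_G(C))) and C3* (for all D ⊆ C, D ⊥_p Cc_G(Pa_G(C)) \ Pa_G(D) | Pa_G(D)) is equivalent to C1* (for all D ⊆ C, D ⊥_p Nd_G(D) \ Pa_G(D) | Pa_G(D)), given that Nd_G(D) = Nd_G(C) for all D ⊆ C. -/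
/-- for a semi-graphoid relation `⊥` and a fixed chain component `C`
of an AMP chain graph (abstracted: `Nd = Nd_G(C) = Nd_G(D)` for all `D ⊆ C`,
`CcPa = Cc_G(Pa_G(C))`, with `Pa D ⊆ CcPa ⊆ Nd` and `C` disjoint from `Nd`),
the conjunction of
C1 (`C ⊥ Nd \ CcPa | CcPa`) and C3* (`∀ D ⊆ C, D ⊥ CcPa \ Pa(D) | Pa(D)`)
is equivalent to C1* (`∀ D ⊆ C, D ⊥ Nd \ Pa(D) | Pa(D)`). -/
theorem stmt2 {V : Type*} [DecidableEq V] [Fintype V]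
    (rel : Finset V → Finset V → Finset V → Prop)
    (symmetry : ∀ X Y Z : Finset V, rel X Y Z → rel Y X Z)
    (decomposition : ∀ X Y W Z : Finset V, rel X (Y ∪ W) Z → rel X Y Z)
    (weakUnion : ∀ X Y W Z : Finset V, rel X (Y ∪ W) Z → rel X Y (Z ∪ W))
    (contraction : ∀ X Y W Z : Finset V, rel X Y (Z ∪ W) → rel X W Z → rel X (Y ∪ W) Z)
    (C Nd CcPa : Finset V) (Pa : Finset V → Finset V)
    (hCcNd : CcPa ⊆ Nd) (hPaCc : ∀ D ⊆ C, Pa D ⊆ CcPa) (hdisj : Disjoint C Nd) :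
    (rel C (Nd \ CcPa) CcPa ∧ ∀ D ⊆ C, rel D (CcPa \ Pa D) (Pa D)) ↔
      (∀ D ⊆ C, rel D (Nd \ Pa D) (Pa D)) := by
  constructor
  · rintro ⟨hC1, hC3⟩ D hD
    have hPa := hPaCc D hD
    -- from C1, swap and decompose to D
    have h1 : rel (Nd \ CcPa) C CcPa := symmetry _ _ _ hC1
    have hCeq : C = D ∪ (C \ D) := (Finset.union_sdiff_of_subset hD).symm
    have h2 : rel (Nd \ CcPa) D CcPa := decomposition _ _ _ _ (hCeq ▸ h1)
    have h3 : rel D (Nd \ CcPa) CcPa := symmetry _ _ _ h2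
    have hCcEq : CcPa = Pa D ∪ (CcPa \ Pa D) := (Finset.union_sdiff_of_subset hPa).symm
    have h4 : rel D (Nd \ CcPa) (Pa D ∪ (CcPa \ Pa D)) := hCcEq ▸ h3
    have h5 : rel D ((Nd \ CcPa) ∪ (CcPa \ Pa D)) (Pa D) :=
      contraction _ _ _ _ h4 (hC3 D hD)
    have hEq : (Nd \ CcPa) ∪ (CcPa \ Pa D) = Nd \ Pa D := by
      ext x
      simp only [Finset.mem_union, Finset.mem_sdiff]
      constructor
      · rintro (⟨h, h2⟩ | ⟨h, h2⟩)
        · exact ⟨h, fun hx => h2 (hPa hx)⟩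
        · exact ⟨hCcNd h, h2⟩
      · rintro ⟨h, h2⟩
        by_cases hc : x ∈ CcPa
        · exact Or.inr ⟨hc, h2⟩
        · exact Or.inl ⟨h, hc⟩
    exact hEq ▸ h5
  · intro h
    constructor
    · have hPa := hPaCc C (le_refl C)
      have hc := h C (le_refl C)
      have hEq : Nd \ Pa C = (Nd \ CcPa) ∪ (CcPa \ Pa C) := by
        ext x
        simp only [Finset.mem_union, Finset.mem_sdiff]
        constructor
        · rintro ⟨h, h2⟩
          by_cases hcx : x ∈ CcPa
          · exact Or.inr ⟨hcx, h2⟩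
          · exact Or.inl ⟨h, hcx⟩
        · rintro (⟨h, h2⟩ | ⟨h, h2⟩)
          · exact ⟨h, fun hx => h2 (hPa hx)⟩
          · exact ⟨hCcNd h, h2⟩
      have h6 : rel C (Nd \ CcPa) (Pa C ∪ (CcPa \ Pa C)) :=
        weakUnion _ _ _ _ (hEq ▸ hc)
      rwa [Finset.union_sdiff_of_subset hPa] at h6
    · intro D hD
      have hPa := hPaCc D hD
      have hc := h D hD
      have hEq : Nd \ Pa D = (CcPa \ Pa D) ∪ (Nd \ CcPa) := by
        ext x
        simp only [Finset.mem_union, Finset.mem_sdiff]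
        constructor
        · rintro ⟨h, h2⟩
          by_cases hcx : x ∈ CcPa
          · exact Or.inl ⟨hcx, h2⟩
          · exact Or.inr ⟨h, hcx⟩
        · rintro (⟨h, h2⟩ | ⟨h, h2⟩)
          · exact ⟨hCcNd h, h2⟩
          · exact ⟨h, fun hx => h2 (hPa hx)⟩
      exact decomposition _ _ _ _ (hEq ▸ hc)
end

section
/- Let p be a strictly positive probability distribution over finite discrete variables indexed by a finite set V, fix a reference configuration x*, and define the canonical potentials φ(x_A) = Σ_{B ⊆ A} (−1)^{|A\B|} log p(x_B, x*_{V\B}) for A ⊆ V. If s, t ∈ V are two variables such that X_s ⊥_p X_t | X_{V\{s,t\}} (conditional independence given all other variables), then φ(x_A) = 0 for every A ⊆ V containing both s and t. -/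
open scoped Classical

/-- The marginal of a distribution `p` on the coordinates in `S`, evaluated at the
configuration `x` (i.e. the probability that the coordinates in `S` take the values
they take in `x`). -/
noncomputable def marginal {V : Type*} [Fintype V] {X : V → Type*} [∀ v, Fintype (X v)]
    (p : (∀ v, X v) → ℝ) (S : Finset V) (x : ∀ v, X v) : ℝ :=
  ∑ y : ∀ v, X v, if ∀ v ∈ S, y v = x v then p y else 0

/-- Conditional independence `A ⊥_p B | S` of the sets of coordinates `A` and `B`
given `S`, expressed multiplicatively via marginals:
`p(a,b,s)·p(s) = p(a,s)·p(b,s)`. -/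
def CondIndep {V : Type*} [Fintype V] {X : V → Type*} [∀ v, Fintype (X v)]
    (p : (∀ v, X v) → ℝ) (A B S : Finset V) : Prop :=
  ∀ x : ∀ v, X v,
    marginal p (A ∪ B ∪ S) x * marginal p S x
      = marginal p (A ∪ S) x * marginal p (B ∪ S) x

theorem marginal_pos' {V : Type*} [Fintype V] {X : V → Type*} [∀ v, Fintype (X v)]
    (p : (∀ v, X v) → ℝ) (hpos : ∀ x, 0 < p x) (S : Finset V) (x : ∀ v, X v) :
    0 < marginal p S x := by
  unfold marginal
  apply Finset.sum_pos'
  · intro y _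
    split
    · exact (hpos y).le
    · exact le_rfl
  · refine ⟨x, Finset.mem_univ x, ?_⟩
    rw [if_pos (fun v _ => rfl)]
    exact hpos x

theorem marginal_congr' {V : Type*} [Fintype V] {X : V → Type*} [∀ v, Fintype (X v)]
    (p : (∀ v, X v) → ℝ) (S : Finset V) {y z : ∀ v, X v}
    (h : ∀ v ∈ S, y v = z v) : marginal p S y = marginal p S z := by
  unfold marginal
  refine Finset.sum_congr rfl fun w _ => ?_
  have : (∀ v ∈ S, w v = y v) ↔ (∀ v ∈ S, w v = z v) := by
    constructor <;> intro h' v hv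
    · rw [h' v hv, h v hv]
    · rw [h' v hv, h v hv]
  simp only [this]

theorem marginal_univ' {V : Type*} [Fintype V] {X : V → Type*} [∀ v, Fintype (X v)]
    (p : (∀ v, X v) → ℝ) (x : ∀ v, X v) : marginal p Finset.univ x = p x := by
  unfold marginal
  rw [Finset.sum_eq_single x]
  · rw [if_pos (fun v _ => rfl)]
  · intro y _ hy
    rw [if_neg]
    intro h
    exact hy (funext fun v => h v (Finset.mem_univ v))
  · simp

/-- The key consequence of conditional independence: swapping the `s` and `t`
coordinates between two configurations that agree off `{s,t}` preserves the
product of probabilities. -/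
theorem cross_eq {V : Type*} [Fintype V] {X : V → Type*} [∀ v, Fintype (X v)]
    (p : (∀ v, X v) → ℝ) (hpos : ∀ x, 0 < p x) (s t : V) (hst : s ≠ t)
    (S : Finset V) (hS : ∀ v, v ∈ S ↔ v ≠ s ∧ v ≠ t)
    (hCI : CondIndep p {s} {t} S)
    (w1 w2 w3 w4 : ∀ v, X v)
    (hoff : ∀ v, v ≠ s → v ≠ t → w2 v = w1 v ∧ w3 v = w1 v ∧ w4 v = w1 v)
    (h3s : w3 s = w1 s) (h3t : w3 t = w2 t) (h4s : w4 s = w2 s) (h4t : w4 t = w1 t) :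
    p w1 * p w2 = p w3 * p w4 := by
  have hunion : ({s} : Finset V) ∪ {t} ∪ S = Finset.univ := by
    ext v
    simp only [Finset.mem_union, Finset.mem_singleton, hS, Finset.mem_univ, iff_true]
    tauto
  set M : ℝ := marginal p S w1 with hM
  have hMpos : (0 : ℝ) < M := marginal_pos' p hpos S w1
  -- all four configurations agree on S
  have hmS : ∀ w : ∀ v, X v, (∀ v, v ≠ s → v ≠ t → w v = w1 v) →
      marginal p S w = M := by
    intro w hw
    exact marginal_congr' p S fun v hv => hw v ((hS v).1 hv).1 ((hS v).1 hv).2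
  have key : ∀ w : ∀ v, X v,
      p w * marginal p S w = marginal p ({s} ∪ S) w * marginal p ({t} ∪ S) w := by
    intro w
    have h := hCI w
    rwa [hunion, marginal_univ'] at h
  -- marginal over {s} ∪ S depends only on the values off t
  have hmsS : ∀ w w' : ∀ v, X v, w s = w' s → (∀ v, v ≠ s → v ≠ t → w v = w' v) →
      marginal p ({s} ∪ S) w = marginal p ({s} ∪ S) w' := by
    intro w w' hws hw
    refine marginal_congr' p _ fun v hv => ?_
    rcases Finset.mem_union.1 hv with hv | hv
    · rw [Finset.mem_singleton] at hv
      subst hv; exact hws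
    · exact hw v ((hS v).1 hv).1 ((hS v).1 hv).2
  have hmtS : ∀ w w' : ∀ v, X v, w t = w' t → (∀ v, v ≠ s → v ≠ t → w v = w' v) →
      marginal p ({t} ∪ S) w = marginal p ({t} ∪ S) w' := by
    intro w w' hwt hw
    refine marginal_congr' p _ fun v hv => ?_
    rcases Finset.mem_union.1 hv with hv | hv
    · rw [Finset.mem_singleton] at hv
      subst hv; exact hwt
    · exact hw v ((hS v).1 hv).1 ((hS v).1 hv).2
  have off2 : ∀ v, v ≠ s → v ≠ t → w2 v = w1 v := fun v hs ht => (hoff v hs ht).1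
  have off3 : ∀ v, v ≠ s → v ≠ t → w3 v = w1 v := fun v hs ht => (hoff v hs ht).2.1
  have off4 : ∀ v, v ≠ s → v ≠ t → w4 v = w1 v := fun v hs ht => (hoff v hs ht).2.2
  have off32 : ∀ v, v ≠ s → v ≠ t → w3 v = w2 v := fun v hs ht => by
    rw [off3 v hs ht, off2 v hs ht]
  have off42 : ∀ v, v ≠ s → v ≠ t → w4 v = w2 v := fun v hs ht => by
    rw [off4 v hs ht, off2 v hs ht]
  have k1 := key w1
  have k2 := key w2
  have k3 := key w3
  have k4 := key w4
  rw [hmS w1 (fun _ _ _ => rfl)] at k1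
  rw [hmS w2 off2] at k2
  rw [hmS w3 off3] at k3
  rw [hmS w4 off4] at k4
  rw [hmsS w3 w1 h3s off3, hmtS w3 w2 h3t off32] at k3
  rw [hmsS w4 w2 h4s off42, hmtS w4 w1 h4t off4] at k4
  have hprod : (p w1 * p w2) * (M * M) = (p w3 * p w4) * (M * M) := by
    have e1 : (p w1 * p w2) * (M * M) = (p w1 * M) * (p w2 * M) := by ring
    have e2 : (p w3 * p w4) * (M * M) = (p w3 * M) * (p w4 * M) := by ring
    rw [e1, e2, k1, k2, k3, k4]
    ring
  exact mul_right_cancel₀ (by positivity) hprod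

/-- if `X_s ⊥_p X_t | X_{V \ {s,t}}` for a strictly positive
distribution `p`, then the canonical potential
`φ(x_A) = Σ_{B ⊆ A} (−1)^{|A\B|} log p(x_B, x*_{V\B})` vanishes for every `A`
containing both `s` and `t` and every configuration `x`. -/
theorem stmt5 {V : Type*} [Fintype V] [DecidableEq V] {X : V → Type*}
    [∀ v, Fintype (X v)]
    (p : (∀ v, X v) → ℝ) (hpos : ∀ x, 0 < p x) (hsum : ∑ x, p x = 1)
    (xstar : ∀ v, X v) (s t : V) (hst : s ≠ t)
    (hCI : CondIndep p {s} {t} (Finset.univ \ {s, t}))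
    (A : Finset V) (hsA : s ∈ A) (htA : t ∈ A) (x : ∀ v, X v) :
    ∑ B ∈ A.powerset,
      (-1 : ℝ) ^ (A \ B).card *
        Real.log (p (fun v => if v ∈ B then x v else xstar v)) = 0 := by
  set g : Finset V → (∀ v, X v) := fun B => fun v => if v ∈ B then x v else xstar v with hg
  set f : Finset V → ℝ := fun B => (-1 : ℝ) ^ (A \ B).card * Real.log (p (g B)) with hf
  show ∑ B ∈ A.powerset, f B = 0
  have hS : ∀ v, v ∈ Finset.univ \ ({s, t} : Finset V) ↔ v ≠ s ∧ v ≠ t := by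
    intro v
    simp [Finset.mem_sdiff, not_or]
  set A' : Finset V := (A.erase s).erase t with hA'
  have htA' : t ∉ A' := Finset.notMem_erase _ _
  have hsA'' : s ∉ insert t A' := by
    simp only [hA', Finset.mem_insert, Finset.mem_erase]
    push_neg
    exact ⟨hst, fun _ h => absurd rfl h⟩
  have hsA' : s ∉ A' := fun h => hsA'' (Finset.mem_insert_of_mem h)
  have hAeq : A = insert s (insert t A') := by
    ext v
    simp only [hA', Finset.mem_insert, Finset.mem_erase]
    constructor
    · intro hv
      by_cases hvs : v = s
      · exact Or.inl hvs
      · by_cases hvt : v = t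
        · exact Or.inr (Or.inl hvt)
        · exact Or.inr (Or.inr ⟨hvt, hvs, hv⟩)
    · rintro (rfl | rfl | ⟨_, _, hv⟩)
      · exact hsA
      · exact htA
      · exact hv
  rw [hAeq, Finset.sum_powerset_insert hsA'', Finset.sum_powerset_insert htA',
    Finset.sum_powerset_insert htA']
  rw [← Finset.sum_add_distrib, ← Finset.sum_add_distrib, ← Finset.sum_add_distrib]
  refine Finset.sum_eq_zero fun B hB => ?_
  rw [Finset.mem_powerset] at hB
  have hsB : s ∉ B := fun h => hsA' (hB h)
  have htB : t ∉ B := fun h => htA' (hB h)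
  have hsB' : s ∉ insert t B := by
    simp only [Finset.mem_insert, not_or]
    exact ⟨hst, hsB⟩
  -- cards
  have hBA : B ⊆ A := by
    rw [hAeq]
    exact hB.trans ((Finset.subset_insert _ _).trans (Finset.subset_insert _ _))
  have hAcard : A.card = A'.card + 2 := by
    rw [hAeq, Finset.card_insert_of_notMem hsA'', Finset.card_insert_of_notMem htA']
  have hBA' : (A' \ B).card = A'.card - B.card := Finset.card_sdiff_of_subset hB
  have hBcard : B.card ≤ A'.card := Finset.card_le_card hB
  have c1 : (A \ B).card = (A' \ B).card + 2 := by
    rw [Finset.card_sdiff_of_subset hBA, hAcard]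
    omega
  have c2 : (A \ insert t B).card = (A' \ B).card + 1 := by
    have hsub : insert t B ⊆ A := by
      rw [hAeq]
      exact (Finset.insert_subset_insert _ hB).trans (Finset.subset_insert _ _)
    rw [Finset.card_sdiff_of_subset hsub, hAcard, Finset.card_insert_of_notMem htB]
    omega
  have c3 : (A \ insert s B).card = (A' \ B).card + 1 := by
    have hsub : insert s B ⊆ A := by
      rw [hAeq]
      exact Finset.insert_subset_iff.2 ⟨Finset.mem_insert_self _ _,
        hB.trans ((Finset.subset_insert _ _).trans (Finset.subset_insert _ _))⟩
    rw [Finset.card_sdiff_of_subset hsub, hAcard, Finset.card_insert_of_notMem hsB]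
    omega
  have c4 : (A \ insert s (insert t B)).card = (A' \ B).card := by
    have hsub : insert s (insert t B) ⊆ A := by
      rw [hAeq]
      exact Finset.insert_subset_insert _ (Finset.insert_subset_insert _ hB)
    rw [Finset.card_sdiff_of_subset hsub, hAcard, Finset.card_insert_of_notMem hsB',
      Finset.card_insert_of_notMem htB]
    omega
  -- the cross identity for the four configurations
  have hcross : p (g (insert s (insert t B))) * p (g B)
      = p (g (insert s B)) * p (g (insert t B)) := by
    refine cross_eq p hpos s t hst _ hS hCI _ _ _ _ ?_ ?_ ?_ ?_ ?_
    · intro v hvs hvt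
      refine ⟨?_, ?_, ?_⟩ <;> simp only [hg] <;>
        simp only [Finset.mem_insert, hvs, hvt, false_or]
    · simp [hg]
    · simp [hg, hsB, htB, Ne.symm hst]
    · simp [hg, hsB, hst]
    · simp [hg]
  have hlog : Real.log (p (g (insert s (insert t B)))) + Real.log (p (g B))
      = Real.log (p (g (insert s B))) + Real.log (p (g (insert t B))) := by
    rw [← Real.log_mul (hpos _).ne' (hpos _).ne', ← Real.log_mul (hpos _).ne' (hpos _).ne',
      hcross]
  simp only [hf, c1, c2, c3, c4]
  linear_combination ((-1 : ℝ) ^ (A' \ B).card) * hlog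
end
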